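/- Let f: ℝ → ℝ be continuous on ℝ, C² on ℝ∖{μ} with bounded second derivative there, with jump [f'] := f'(μ⁺) − f'(μ⁻), and suppose μ ∈ [x_j, x_{j+1}]. Then |D_{j−1} f| ≥ (x_{j+1}−μ)|[f']| / (h_{j+1}(h_j+h_{j+1})) − (1/2) M₂, where M₂ := sup_{ℝ∖{μ}} |f''|. In particular, if μ ≤ (x_j + x_{j+1})/2, then |D_{j−1} f| ≥ |[f']| / (2(h_j+h_{j+1})) − (1/2) M₂. -/

import Mathlib

open Set Filter Topology intervalIntegral

private lemma lip_cont' {gd : ℝ → ℝ} {M : ℝ} (hM : 0 ≤ M)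
    (hlip : ∀ x y, |gd x - gd y| ≤ M * |x - y|) : Continuous gd := by
  have : LipschitzWith M.toNNReal gd := by
    apply LipschitzWith.of_dist_le_mul
    intro x y
    simpa [Real.dist_eq, Real.coe_toNNReal _ hM] using hlip x y
  exact this.continuous

private lemma ftc' {g gd : ℝ → ℝ} {M : ℝ} (hM : 0 ≤ M)
    (hg : ∀ x, HasDerivAt g (gd x) x)
    (hlip : ∀ x y, |gd x - gd y| ≤ M * |x - y|) (a b : ℝ) :
    g b - g a = ∫ t in a..b, gd t := by
  symm
  exact intervalIntegral.integral_eq_sub_of_hasDerivAt (fun x _ => hg x)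
    ((lip_cont' hM hlip).intervalIntegrable a b)

private lemma taylorL' {g gd : ℝ → ℝ} {M : ℝ} (hM : 0 ≤ M)
    (hg : ∀ x, HasDerivAt g (gd x) x)
    (hlip : ∀ x y, |gd x - gd y| ≤ M * |x - y|)
    {a b : ℝ} (hab : a ≤ b) :
    |g b - g a - gd a * (b - a)| ≤ M * (b - a)^2 / 2 := by
  have hc := lip_cont' hM hlip
  have key : g b - g a - gd a * (b - a) = ∫ t in a..b, (gd t - gd a) := by
    rw [intervalIntegral.integral_sub (hc.intervalIntegrable a b) intervalIntegrable_const,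
      ftc' hM hg hlip a b]
    simp [mul_comm]
  rw [key]
  calc |∫ t in a..b, (gd t - gd a)| ≤ ∫ t in a..b, |gd t - gd a| :=
        intervalIntegral.abs_integral_le_integral_abs hab
    _ ≤ ∫ t in a..b, M * (t - a) := by
        apply intervalIntegral.integral_mono_on hab
        · exact ((hc.sub continuous_const).abs).intervalIntegrable a b
        · exact (Continuous.intervalIntegrable (by continuity) a b)
        · intro t ht
          calc |gd t - gd a| ≤ M * |t - a| := hlip t a
            _ = M * (t - a) := by rw [abs_of_nonneg (by linarith [ht.1])]
    _ = M * (b - a)^2 / 2 := by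
        rw [intervalIntegral.integral_const_mul,
          intervalIntegral.integral_sub intervalIntegral.intervalIntegrable_id
            intervalIntegrable_const]
        simp [integral_id]
        ring

private lemma taylorR' {g gd : ℝ → ℝ} {M : ℝ} (hM : 0 ≤ M)
    (hg : ∀ x, HasDerivAt g (gd x) x)
    (hlip : ∀ x y, |gd x - gd y| ≤ M * |x - y|)
    {a b : ℝ} (hab : a ≤ b) :
    |g b - g a - gd b * (b - a)| ≤ M * (b - a)^2 / 2 := by
  have hc := lip_cont' hM hlip
  have key : g b - g a - gd b * (b - a) = ∫ t in a..b, (gd t - gd b) := by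
    rw [intervalIntegral.integral_sub (hc.intervalIntegrable a b) intervalIntegrable_const,
      ftc' hM hg hlip a b]
    simp [mul_comm]
  rw [key]
  calc |∫ t in a..b, (gd t - gd b)| ≤ ∫ t in a..b, |gd t - gd b| :=
        intervalIntegral.abs_integral_le_integral_abs hab
    _ ≤ ∫ t in a..b, M * (b - t) := by
        apply intervalIntegral.integral_mono_on hab
        · exact ((hc.sub continuous_const).abs).intervalIntegrable a b
        · exact (Continuous.intervalIntegrable (by continuity) a b)
        · intro t ht
          calc |gd t - gd b| ≤ M * |t - b| := hlip t b
            _ = M * (b - t) := by rw [abs_of_nonpos (by linarith [ht.2]), neg_sub]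
    _ = M * (b - a)^2 / 2 := by
        rw [intervalIntegral.integral_const_mul,
          intervalIntegral.integral_sub intervalIntegrable_const
            intervalIntegral.intervalIntegrable_id]
        simp [integral_id]
        ring

private lemma dd_bound' {g gd : ℝ → ℝ} {M : ℝ} (hM : 0 ≤ M)
    (hg : ∀ x, HasDerivAt g (gd x) x)
    (hlip : ∀ x y, |gd x - gd y| ≤ M * |x - y|)
    {a b c : ℝ} (hab : a < b) (hbc : b < c) :
    |g a / ((b - a) * (c - a)) - g b / ((b - a) * (c - b))
      + g c / ((c - b) * (c - a))| ≤ M / 2 := by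
  set h1 := b - a with hh1
  set h2 := c - b with hh2
  have h1p : 0 < h1 := by simp [hh1]; linarith
  have h2p : 0 < h2 := by simp [hh2]; linarith
  set E1 := g b - g a - gd b * (b - a) with hE1
  set E2 := g c - g b - gd b * (c - b) with hE2
  have hE1b : |E1| ≤ M * h1^2 / 2 := taylorR' hM hg hlip hab.le
  have hE2b : |E2| ≤ M * h2^2 / 2 := taylorL' hM hg hlip hbc.le
  have key : g a / ((b - a) * (c - a)) - g b / ((b - a) * (c - b))
      + g c / ((c - b) * (c - a)) = (E2 / h2 - E1 / h1) / (h1 + h2) := by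
    rw [hE1, hE2, hh1, hh2]
    have e1 : b - a ≠ 0 := by linarith
    have e2 : c - b ≠ 0 := by linarith
    have e3 : c - a ≠ 0 := by linarith
    have e4 : b - a + (c - b) = c - a := by ring
    rw [e4]
    field_simp
    ring
  rw [key]
  rw [abs_div, abs_of_pos (by linarith : (0:ℝ) < h1 + h2), div_le_iff₀ (by linarith)]
  calc |E2 / h2 - E1 / h1| ≤ |E2 / h2| + |E1 / h1| := abs_sub _ _
    _ ≤ (M * h2^2 / 2) / h2 + (M * h1^2 / 2) / h1 := by
        rw [abs_div, abs_div, abs_of_pos h2p, abs_of_pos h1p]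
        gcongr
    _ = M / 2 * (h1 + h2) := by field_simp; ring

private lemma extend_left' {f f' f'' : ℝ → ℝ} {μ : ℝ}
    (hf : Continuous f)
    (hd1 : ∀ x ≠ μ, HasDerivAt f (f' x) x)
    (hd2 : ∀ x ≠ μ, HasDerivAt f' (f'' x) x)
    {M₂ : ℝ} (hM0 : 0 ≤ M₂) (hM : ∀ x ≠ μ, |f'' x| ≤ M₂)
    {dL : ℝ} (hdL : HasDerivWithinAt f dL (Set.Iic μ) μ) :
    ∃ F : ℝ → ℝ, (∀ x < μ, F x = f' x) ∧ F μ = dL ∧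
      (∀ x y, |F x - F y| ≤ M₂ * |x - y|) := by
  have hlipL : LipschitzOnWith M₂.toNNReal f' (Iio μ) := by
    apply Convex.lipschitzOnWith_of_nnnorm_hasDerivWithin_le (convex_Iio μ)
      (f' := fun x => f'' x)
    · intro x hx
      exact (hd2 x (ne_of_lt hx)).hasDerivWithinAt
    · intro x hx
      rw [← NNReal.coe_le_coe]
      simpa [Real.coe_toNNReal _ hM0] using hM x (ne_of_lt hx)
  obtain ⟨F, hFlip, hFeq⟩ := hlipL.extend_real
  refine ⟨F, fun x hx => (hFeq hx).symm, ?_, ?_⟩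
  · have hten : Tendsto (fun x => deriv f x) (𝓝[<] μ) (𝓝 (F μ)) := by
      have h1 : Tendsto F (𝓝[<] μ) (𝓝 (F μ)) :=
        (hFlip.continuous.tendsto μ).mono_left nhdsWithin_le_nhds
      apply h1.congr'
      filter_upwards [self_mem_nhdsWithin] with x (hx : x < μ)
      rw [← hFeq hx, (hd1 x (ne_of_lt hx)).deriv]
    have hder : HasDerivWithinAt f (F μ) (Iic μ) μ := by
      apply hasDerivWithinAt_Iic_of_tendsto_deriv (s := Iio μ)
      · intro x hx
        exact ((hd1 x (ne_of_lt hx)).differentiableAt).differentiableWithinAt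
      · exact hf.continuousWithinAt
      · exact self_mem_nhdsWithin
      · exact hten
    rw [← hder.derivWithin (uniqueDiffOn_Iic μ μ self_mem_Iic),
      hdL.derivWithin (uniqueDiffOn_Iic μ μ self_mem_Iic)]
  · intro x y
    have := hFlip.dist_le_mul x y
    simpa [Real.dist_eq, Real.coe_toNNReal _ hM0] using this

private lemma extend_right' {f f' f'' : ℝ → ℝ} {μ : ℝ}
    (hf : Continuous f)
    (hd1 : ∀ x ≠ μ, HasDerivAt f (f' x) x)
    (hd2 : ∀ x ≠ μ, HasDerivAt f' (f'' x) x)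
    {M₂ : ℝ} (hM0 : 0 ≤ M₂) (hM : ∀ x ≠ μ, |f'' x| ≤ M₂)
    {dR : ℝ} (hdR : HasDerivWithinAt f dR (Set.Ici μ) μ) :
    ∃ G : ℝ → ℝ, (∀ x, μ < x → G x = f' x) ∧ G μ = dR ∧
      (∀ x y, |G x - G y| ≤ M₂ * |x - y|) := by
  have hlipR : LipschitzOnWith M₂.toNNReal f' (Ioi μ) := by
    apply Convex.lipschitzOnWith_of_nnnorm_hasDerivWithin_le (convex_Ioi μ)
      (f' := fun x => f'' x)
    · intro x hx
      exact (hd2 x (ne_of_gt hx)).hasDerivWithinAt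
    · intro x hx
      rw [← NNReal.coe_le_coe]
      simpa [Real.coe_toNNReal _ hM0] using hM x (ne_of_gt hx)
  obtain ⟨G, hGlip, hGeq⟩ := hlipR.extend_real
  refine ⟨G, fun x hx => (hGeq hx).symm, ?_, ?_⟩
  · have hten : Tendsto (fun x => deriv f x) (𝓝[>] μ) (𝓝 (G μ)) := by
      have h1 : Tendsto G (𝓝[>] μ) (𝓝 (G μ)) :=
        (hGlip.continuous.tendsto μ).mono_left nhdsWithin_le_nhds
      apply h1.congr'
      filter_upwards [self_mem_nhdsWithin] with x (hx : μ < x)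
      rw [← hGeq hx, (hd1 x (ne_of_gt hx)).deriv]
    have hder : HasDerivWithinAt f (G μ) (Ici μ) μ := by
      apply hasDerivWithinAt_Ici_of_tendsto_deriv (s := Ioi μ)
      · intro x hx
        exact ((hd1 x (ne_of_gt hx)).differentiableAt).differentiableWithinAt
      · exact hf.continuousWithinAt
      · exact self_mem_nhdsWithin
      · exact hten
    rw [← hder.derivWithin (uniqueDiffOn_Ici μ μ self_mem_Ici),
      hdR.derivWithin (uniqueDiffOn_Ici μ μ self_mem_Ici)]
  · intro x y
    have := hGlip.dist_le_mul x y
    simpa [Real.dist_eq, Real.coe_toNNReal _ hM0] using this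

/-- Second order divided difference on the nodes `X i, X (i+1), X (i+2)`. -/
noncomputable def Dd (X : ℤ → ℝ) (f : ℝ → ℝ) (i : ℤ) : ℝ :=
    f (X i) / ((X (i + 1) - X i) * (X (i + 2) - X i))
  - f (X (i + 1)) / ((X (i + 1) - X i) * (X (i + 2) - X (i + 1)))
  + f (X (i + 2)) / ((X (i + 2) - X (i + 1)) * (X (i + 2) - X i))

/-- Lower bound for the divided difference straddling the corner:
`|D_{j−1} f| ≥ (x_{j+1} − μ)|[f']|/(h_{j+1}(h_j + h_{j+1})) − M₂/2`, and if
`μ ≤ (x_j + x_{j+1})/2` then `|D_{j−1} f| ≥ |[f']|/(2(h_j + h_{j+1})) − M₂/2`. -/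
theorem statement10 (X : ℤ → ℝ) (hX : StrictMono X)
    (f f' f'' : ℝ → ℝ) (μ : ℝ)
    (hf : Continuous f)
    (hd1 : ∀ x ≠ μ, HasDerivAt f (f' x) x)
    (hd2 : ∀ x ≠ μ, HasDerivAt f' (f'' x) x)
    (hc2 : ContinuousOn f'' {μ}ᶜ)
    (M₂ : ℝ) (hM : ∀ x ≠ μ, |f'' x| ≤ M₂)
    (dL dR : ℝ)
    (hdL : HasDerivWithinAt f dL (Set.Iic μ) μ)
    (hdR : HasDerivWithinAt f dR (Set.Ici μ) μ)
    (j : ℤ) (hμ : μ ∈ Set.Icc (X j) (X (j + 1))) :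
    (X (j + 1) - μ) * |dR - dL| / ((X (j + 1) - X j) * (X (j + 1) - X (j - 1))) - M₂ / 2
      ≤ |Dd X f (j - 1)| ∧
    (μ ≤ (X j + X (j + 1)) / 2 →
      |dR - dL| / (2 * (X (j + 1) - X (j - 1))) - M₂ / 2 ≤ |Dd X f (j - 1)|) := by
  have hM0 : 0 ≤ M₂ := le_trans (abs_nonneg _) (hM (μ + 1) (by intro h; linarith))
  set a := X (j - 1) with ha
  set b := X j with hb
  set c := X (j + 1) with hc
  have hab : a < b := hX (by omega)
  have hbc : b < c := hX (by omega)
  have hμb : b ≤ μ := hμ.1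
  have hμc : μ ≤ c := hμ.2
  set J := dR - dL with hJ
  set g : ℝ → ℝ := fun x => f x - J * max (x - μ) 0 with hg_def
  obtain ⟨F, hFlt, hFμ, hFlip⟩ := extend_left' hf hd1 hd2 hM0 hM hdL
  obtain ⟨G, hGgt, hGμ, hGlip⟩ := extend_right' hf hd1 hd2 hM0 hM hdR
  set gd : ℝ → ℝ := fun x => if x ≤ μ then F x else G x - J with hgd_def
  have hFGμ : F μ = G μ - J := by rw [hFμ, hGμ, hJ]; ring
  -- Lipschitz of gd
  have hlip : ∀ x y, |gd x - gd y| ≤ M₂ * |x - y| := by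
    have key : ∀ x y, x ≤ y → |gd x - gd y| ≤ M₂ * (y - x) := by
      intro x y hxy
      by_cases hx : x ≤ μ <;> by_cases hy : y ≤ μ
      · simpa [hgd_def, hx, hy, abs_of_nonpos (by linarith : x - y ≤ 0)] using hFlip x y
      · -- x ≤ μ < y
        push_neg at hy
        have e : gd x - gd y = (F x - F μ) + (G μ - G y) := by
          simp only [hgd_def, if_pos hx, if_neg (not_le.mpr hy)]
          rw [hFGμ]; ring
        rw [e]
        calc |(F x - F μ) + (G μ - G y)| ≤ |F x - F μ| + |G μ - G y| := abs_add_le _ _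
          _ ≤ M₂ * |x - μ| + M₂ * |μ - y| := add_le_add (hFlip x μ) (hGlip μ y)
          _ = M₂ * (y - x) := by
              rw [abs_of_nonpos (by linarith : x - μ ≤ 0),
                abs_of_nonpos (by linarith : μ - y ≤ 0)]
              ring
      · exact absurd (le_trans hxy hy) hx
      · push_neg at hx
        simp only [hgd_def, if_neg (not_le.mpr hx), if_neg (not_le.mpr (lt_of_lt_of_le hx hxy))]
        have : G x - J - (G y - J) = G x - G y := by ring
        rw [this]
        simpa [abs_of_nonpos (by linarith : x - y ≤ 0)] using hGlip x y
    intro x y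
    rcases le_total x y with h | h
    · rw [abs_of_nonpos (by linarith : x - y ≤ 0), neg_sub]; exact key x y h
    · rw [abs_of_nonneg (by linarith : (0:ℝ) ≤ x - y)]
      have := key y x h
      rwa [abs_sub_comm] at this
  -- g has derivative gd everywhere
  have hg : ∀ x, HasDerivAt g (gd x) x := by
    intro x
    rcases lt_trichotomy x μ with hx | hx | hx
    · have : gd x = f' x := by
        simp only [hgd_def, if_pos hx.le]; exact hFlt x hx
      rw [this]
      apply (hd1 x (ne_of_lt hx)).congr_of_eventuallyEq
      filter_upwards [Iio_mem_nhds hx] with y (hy : y < μ)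
      simp [hg_def, max_eq_right (by linarith : y - μ ≤ 0)]
    · subst hx
      have hval : gd x = dL := by simp [hgd_def, hFμ]
      rw [hval]
      have hIic : HasDerivWithinAt g dL (Iic x) x := by
        apply hdL.congr
        · intro y hy
          simp [hg_def, max_eq_right (by simpa using hy : y - x ≤ 0)]
        · simp [hg_def]
      have hIci : HasDerivWithinAt g dL (Ici x) x := by
        have base : HasDerivWithinAt (fun y => f y - J * (y - x)) (dR - J * 1) (Ici x) x :=
          hdR.sub ((((hasDerivAt_id x).sub_const x).const_mul J).hasDerivWithinAt)
        have : dR - J * 1 = dL := by rw [hJ]; ring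
        rw [this] at base
        apply base.congr
        · intro y hy
          simp [hg_def, max_eq_left (by simpa using hy : (0:ℝ) ≤ y - x)]
        · simp [hg_def]
      have := hIic.union hIci
      rwa [Iic_union_Ici, hasDerivWithinAt_univ] at this
    · have : gd x = f' x - J := by
        simp only [hgd_def, if_neg (not_le.mpr hx)]; rw [hGgt x hx]
      rw [this]
      have base : HasDerivAt (fun y => f y - J * (y - μ)) (f' x - J * 1) x :=
        (hd1 x (ne_of_gt hx)).sub (((hasDerivAt_id x).sub_const μ).const_mul J)
      have e : f' x - J * 1 = f' x - J := by ring
      rw [e] at base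
      apply base.congr_of_eventuallyEq
      filter_upwards [Ioi_mem_nhds hx] with y (hy : μ < y)
      simp [hg_def, max_eq_left (by linarith : (0:ℝ) ≤ y - μ)]
  -- divided difference bound for g
  have hDg : |g a / ((b - a) * (c - a)) - g b / ((b - a) * (c - b))
      + g c / ((c - b) * (c - a))| ≤ M₂ / 2 := dd_bound' hM0 hg hlip hab hbc
  -- rewrite Dd X f (j-1)
  have e1 : X (j - 1 + 1) = b := by rw [hb]; congr 1; ring
  have e2 : X (j - 1 + 2) = c := by rw [hc]; congr 1; ring
  have hsa : g a = f a - 0 := by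
    simp [hg_def, max_eq_right (by linarith : a - μ ≤ 0)]
  have hsb : g b = f b - 0 := by
    simp [hg_def, max_eq_right (by linarith : b - μ ≤ 0)]
  have hsc : g c = f c - J * (c - μ) := by
    simp [hg_def, max_eq_left (by linarith : (0:ℝ) ≤ c - μ)]
  set Dg := g a / ((b - a) * (c - a)) - g b / ((b - a) * (c - b))
      + g c / ((c - b) * (c - a)) with hDg_def
  have hsplit : Dd X f (j - 1) = Dg + J * (c - μ) / ((c - b) * (c - a)) := by
    rw [Dd, e1, e2, hDg_def, hsa, hsb, hsc]
    have d1 : (b - a) * (c - a) ≠ 0 := ne_of_gt (mul_pos (by linarith) (by linarith))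
    have d2 : (b - a) * (c - b) ≠ 0 := ne_of_gt (mul_pos (by linarith) (by linarith))
    have d3 : (c - b) * (c - a) ≠ 0 := ne_of_gt (mul_pos (by linarith) (by linarith))
    field_simp
    ring
  -- lower bound |Df| ≥ |Ds| - |Dg|
  have habs : |J * (c - μ) / ((c - b) * (c - a))| - M₂ / 2 ≤ |Dd X f (j - 1)| := by
    rw [hsplit]
    have h1 : |J * (c - μ) / ((c - b) * (c - a))|
        ≤ |Dg + J * (c - μ) / ((c - b) * (c - a))| + |Dg| := by
      calc |J * (c - μ) / ((c - b) * (c - a))|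
          = |(Dg + J * (c - μ) / ((c - b) * (c - a))) + -Dg| := by congr 1; ring
        _ ≤ |Dg + J * (c - μ) / ((c - b) * (c - a))| + |-Dg| := abs_add_le _ _
        _ = |Dg + J * (c - μ) / ((c - b) * (c - a))| + |Dg| := by rw [abs_neg]
    linarith
  have habs2 : |J * (c - μ) / ((c - b) * (c - a))|
      = (c - μ) * |J| / ((c - b) * (c - a)) := by
    rw [abs_div, abs_mul, abs_of_nonneg (by linarith : (0:ℝ) ≤ c - μ),
      abs_of_pos (mul_pos (by linarith : (0:ℝ) < c - b) (by linarith : (0:ℝ) < c - a))]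
    ring
  rw [habs2] at habs
  constructor
  · exact habs
  · intro hmid
    have hcμ : (c - b) / 2 ≤ c - μ := by
      have : μ ≤ (b + c) / 2 := hmid
      linarith
    have step : |J| / (2 * (c - a)) ≤ (c - μ) * |J| / ((c - b) * (c - a)) := by
      have hcb : c - b ≠ 0 := by linarith
      have hca : c - a ≠ 0 := by linarith
      have e : |J| / (2 * (c - a)) = ((c - b) / 2) * |J| / ((c - b) * (c - a)) := by
        field_simp
      rw [e]
      exact (div_le_div_iff_of_pos_right (mul_pos (by linarith) (by linarith))).mpr
        (mul_le_mul_of_nonneg_right hcμ (abs_nonneg J))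
    linarith
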